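/- Assume Phi satisfies the Restricted Isometry Condition with parameters (2n, eps) with eps <= 0.1. Let v0 be an n-sparse vector supported on a set S, u0 = Phi^* Phi v0, and u in R^d with ||(u0 - u)|_T||_2 <= 2.4*eps*||v0||_2 + (1+eps)*||e||_2 for all sets T of size at most n. If J is a set of at most n indices maximizing ||u|_J||_2 among sets of that size intersected with supp(u) (in particular ||u|_J||_2 >= ||u|_S||_2), then ||u|_J||_2 >= (1 - 4.43*eps)*||v0||_2 - (1+eps)*||e||_2. -/

import Mathlib

open scoped BigOperators Matrix

noncomputable def l2 {d : ℕ} (v : Fin d → ℝ) : ℝ := Real.sqrt (∑ i, (v i)^2)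

noncomputable def l1 {d : ℕ} (v : Fin d → ℝ) : ℝ := ∑ i, |v i|

noncomputable def linf {d : ℕ} (v : Fin d → ℝ) : ℝ := ⨆ i, |v i|

noncomputable def restrict {d : ℕ} (v : Fin d → ℝ) (T : Finset (Fin d)) : Fin d → ℝ :=
  fun i => if i ∈ T then v i else 0

open Classical in
noncomputable def spt {d : ℕ} (v : Fin d → ℝ) : Finset (Fin d) :=
  Finset.univ.filter (fun i => v i ≠ 0)

def RIC {N d : ℕ} (Φ : Matrix (Fin N) (Fin d) ℝ) (m : ℕ) (ε : ℝ) : Prop :=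
  ∀ z : Fin d → ℝ, (spt z).card ≤ m →
    (1 - ε) * l2 z ≤ l2 (Φ.mulVec z) ∧ l2 (Φ.mulVec z) ≤ (1 + ε) * l2 z

/-!
By the restricted isometry property, `⟪Φᵀ Φ v₀, v₀⟫ = ‖Φ v₀‖² ≥ (1 - ε)² ‖v₀‖²`, and
since `v₀` lives on `S`, Cauchy–Schwarz bounds the left side by `‖(Φᵀ Φ v₀)|_S‖ ‖v₀‖`; so the
energy of `u₀ = Φᵀ Φ v₀` on `S` is at least `(1 - ε)² ‖v₀‖`. The approximation hypothesis on
`T = S` moves this to `u` at a cost of `2.4 ε ‖v₀‖ + (1 + ε) ‖e‖`, and `J` carries at least the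
energy on `S`. Finally `(1 - ε)² - 2.4 ε ≥ 1 - 4.43 ε`.
-/

lemma l2_eq_norm {d : ℕ} (v : Fin d → ℝ) : l2 v = ‖WithLp.toLp 2 v‖ := by
  simp [l2, EuclideanSpace.norm_eq]

lemma l2_nonneg {d : ℕ} (v : Fin d → ℝ) : 0 ≤ l2 v := Real.sqrt_nonneg _

lemma l2_sub_le {d : ℕ} (a b : Fin d → ℝ) : l2 a - l2 b ≤ l2 (a - b) := by
  simpa only [l2_eq_norm, WithLp.toLp_sub] using norm_sub_norm_le _ _

lemma dotProduct_self_eq_l2_sq {d : ℕ} (v : Fin d → ℝ) : v ⬝ᵥ v = l2 v ^ 2 := by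
  rw [l2, Real.sq_sqrt (by positivity)]
  simp only [dotProduct, sq]

lemma dotProduct_le_l2_mul_l2 {d : ℕ} (a b : Fin d → ℝ) : a ⬝ᵥ b ≤ l2 a * l2 b :=
  Real.sum_mul_le_sqrt_mul_sqrt _ a b

lemma restrict_sub {d : ℕ} (a b : Fin d → ℝ) (T : Finset (Fin d)) :
    restrict (a - b) T = restrict a T - restrict b T := by
  funext i
  by_cases hi : i ∈ T <;> simp [restrict, hi]

lemma restrict_dotProduct_of_spt_subset {d : ℕ} (w v : Fin d → ℝ) {T : Finset (Fin d)}
    (hv : spt v ⊆ T) : restrict w T ⬝ᵥ v = w ⬝ᵥ v := by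
  refine Finset.sum_congr rfl fun i _ => ?_
  by_cases hi : i ∈ T
  · simp [restrict, hi]
  · have : v i = 0 := by
      by_contra h
      exact hi (hv (by simp [spt, h]))
    simp [this]

lemma RIC.mul_l2_le_l2_restrict_gram {N d m : ℕ} {Φ : Matrix (Fin N) (Fin d) ℝ} {ε : ℝ}
    (hΦ : RIC Φ m ε) (hε : ε ≤ 1) {v : Fin d → ℝ} {S : Finset (Fin d)}
    (hvm : (spt v).card ≤ m) (hvS : spt v ⊆ S) :
    (1 - ε) ^ 2 * l2 v ≤ l2 (restrict (Φᵀ *ᵥ (Φ *ᵥ v)) S) := by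
  have hlower : (1 - ε) * l2 v ≤ l2 (Φ *ᵥ v) := (hΦ v hvm).1
  have henergy : l2 (Φ *ᵥ v) ^ 2 ≤ l2 (restrict (Φᵀ *ᵥ (Φ *ᵥ v)) S) * l2 v :=
    calc l2 (Φ *ᵥ v) ^ 2 = Φᵀ *ᵥ (Φ *ᵥ v) ⬝ᵥ v := by
          rw [← dotProduct_self_eq_l2_sq, Matrix.mulVec_transpose, Matrix.dotProduct_mulVec]
      _ = restrict (Φᵀ *ᵥ (Φ *ᵥ v)) S ⬝ᵥ v :=
          (restrict_dotProduct_of_spt_subset _ _ hvS).symm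
      _ ≤ _ := dotProduct_le_l2_mul_l2 _ _
  have hv := l2_nonneg v
  rcases hv.eq_or_lt with hv0 | hvpos
  · rw [← hv0, mul_zero]
    exact l2_nonneg _
  have hsq : ((1 - ε) * l2 v) ^ 2 ≤ l2 (Φ *ᵥ v) ^ 2 :=
    pow_le_pow_left₀ (mul_nonneg (by linarith) hv) hlower 2
  nlinarith

theorem stmt17_general {N d : ℕ} (Φ : Matrix (Fin N) (Fin d) ℝ) (n : ℕ) (ε : ℝ)
    (hε : 0 < ε) (hε1 : ε ≤ 0.1) (hRIC : RIC Φ (2 * n) ε)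
    (v₀ : Fin d → ℝ) (S : Finset (Fin d)) (hv₀S : spt v₀ ⊆ S) (hS : S.card ≤ n)
    (e : Fin N → ℝ) (u u₀ : Fin d → ℝ)
    (hu₀ : u₀ = Φᵀ.mulVec (Φ.mulVec v₀))
    (happrox : ∀ T : Finset (Fin d), T.card ≤ n →
      l2 (restrict (u₀ - u) T) ≤ 2.4 * ε * l2 v₀ + (1 + ε) * l2 e)
    (J : Finset (Fin d))
    (hJmax : l2 (restrict u S) ≤ l2 (restrict u J)) :
    l2 (restrict u J) ≥ (1 - 4.43 * ε) * l2 v₀ - (1 + ε) * l2 e := by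
  have hcard : (spt v₀).card ≤ 2 * n := by
    have := Finset.card_le_card hv₀S
    omega
  have henergy : (1 - ε) ^ 2 * l2 v₀ ≤ l2 (restrict u₀ S) :=
    hu₀ ▸ hRIC.mul_l2_le_l2_restrict_gram (by linarith) hcard hv₀S
  have htransfer : l2 (restrict u₀ S) - l2 (restrict (u₀ - u) S) ≤ l2 (restrict u S) := by
    simpa only [restrict_sub, sub_sub_cancel] using
      l2_sub_le (restrict u₀ S) (restrict (u₀ - u) S)
  have hconst : (1 - 4.43 * ε) * l2 v₀ ≤ ((1 - ε) ^ 2 - 2.4 * ε) * l2 v₀ :=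
    mul_le_mul_of_nonneg_right (by nlinarith) (l2_nonneg v₀)
  linarith [happrox S hS]

/-- Lemma 2.5 (Localizing the energy), in the form with explicit constants. -/
theorem stmt17 {N d : ℕ} (Φ : Matrix (Fin N) (Fin d) ℝ) (n : ℕ) (ε : ℝ)
    (hε : 0 < ε) (hε1 : ε ≤ 0.1) (hRIC : RIC Φ (2 * n) ε)
    (v₀ : Fin d → ℝ) (S : Finset (Fin d)) (hv₀S : spt v₀ ⊆ S) (hS : S.card ≤ n)
    (e : Fin N → ℝ) (u u₀ : Fin d → ℝ)
    (hu₀ : u₀ = Φᵀ.mulVec (Φ.mulVec v₀))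
    (happrox : ∀ T : Finset (Fin d), T.card ≤ n →
      l2 (restrict (u₀ - u) T) ≤ 2.4 * ε * l2 v₀ + (1 + ε) * l2 e)
    (J : Finset (Fin d)) (hJ : J.card ≤ n)
    (hJmax : l2 (restrict u S) ≤ l2 (restrict u J)) :
    l2 (restrict u J) ≥ (1 - 4.43 * ε) * l2 v₀ - (1 + ε) * l2 e :=
  stmt17_general Φ n ε hε hε1 hRIC v₀ S hv₀S hS e u u₀ hu₀ happrox J hJmax
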